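/- arXiv:1812.04182 — 2 statements merged into one kernel-verified Lean document; each statement's English description precedes it below -/
import Mathlib

section
/- There exists an entangled completely symmetric state of rank six on ℂ⁴ ⊗ ℂ⁴. Concretely, let x_0,x_1,x_2,x_3 be the standard basis vectors of ℝ⁴, x_4 = (1,1,1,1), x_5 = (1,2,3,4), x_6 = (1,−2,3,−4), x_7 = (1,−8/3,1,−8/3), and for x ∈ ℝ⁴ let P_x denote the rank-one matrix ((i,k),(j,l)) ↦ x(i)x(k)x(j)x(l). Then there exist λ_0,…,λ_6 > 0 and λ > 0 such that ρ = ∑_{i=0}^{6} λ_i P_{x_i} − λ P_{x_7} is positive semidefinite of matrix rank 6, is (after normalizing to trace one) a CS state, and is not separable. -/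
/-!
Put `cᵢ = (44, 88, -132, -176, -48, 11, 11)` and `aᵢ = cᵢ xᵢ ⊗ xᵢ` for `i < 7`. These weights
satisfy `∑ aᵢ = 18 x₇ ⊗ x₇`, so with `λᵢ = 7cᵢ²` and `λ = 18²` the matrix `ρ` equals
`7 ∑ aᵢaᵢ* - (∑ aᵢ)(∑ aᵢ)*`. By Lagrange's identity this is `∑_{i<j} (aᵢ - aⱼ)(aᵢ - aⱼ)*`,
hence positive semidefinite; it also equals `B (7·1 - J) B*` where `B` has the six columns
`aᵢ - a₆`, which are linearly independent, so `ρ` has rank 6.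

If `ρ = ∑ₜ zₜzₜ*` with product vectors `zₜ = uₜ ⊗ vₜ`, every `zₜ` is orthogonal to `ker ρ`.
A vector `w` lies in `ker ρ` as soon as `⟨aᵢ, w⟩` does not depend on `i`. This applies to the
antisymmetric tensors `eⱼ ⊗ eₗ - eₗ ⊗ eⱼ`, which forces `vₜ ∥ uₜ`, and to four quadrics `q` with
`cᵢ q(xᵢ)` constant, which therefore vanish at `uₜ`. Three of them vanish exactly on the eight
lines `ℂxᵢ`, where the fourth does not, so `uₜ = 0`.
-/

open scoped ComplexOrder

/-- Bipartite completely symmetric matrix on `ℂ⁴ ⊗ ℂ⁴`. -/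
def IsCS2 (ρ : Matrix (Fin 4 × Fin 4) (Fin 4 × Fin 4) ℂ) : Prop :=
  ∀ (π : Equiv.Perm (Fin 4)) (f : Fin 4 → Fin 4),
    ρ (f (π 0), f (π 1)) (f (π 2), f (π 3)) = ρ (f 0, f 1) (f 2, f 3)

/-- Bipartite separability. -/
def Sep2 (ρ : Matrix (Fin 4 × Fin 4) (Fin 4 × Fin 4) ℂ) : Prop :=
  ∃ (m : ℕ) (x y : Fin m → Fin 4 → ℂ),
    (∀ t, x t ≠ 0) ∧ (∀ t, y t ≠ 0) ∧
    ∀ (i j k l : Fin 4),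
      ρ (i, k) (j, l) = ∑ t, (x t i * y t k) * star (x t j * y t l)

/-- The eight real vectors of the construction. -/
noncomputable def xv : Fin 8 → Fin 4 → ℝ :=
  ![![1, 0, 0, 0], ![0, 1, 0, 0], ![0, 0, 1, 0], ![0, 0, 0, 1],
    ![1, 1, 1, 1], ![1, 2, 3, 4], ![1, -2, 3, -4], ![1, -8/3, 1, -8/3]]

/-- `P_x`: the rank-one completely symmetric matrix built from a real vector `x`. -/
noncomputable def Pmat (x : Fin 4 → ℝ) : Matrix (Fin 4 × Fin 4) (Fin 4 × Fin 4) ℂ :=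
  fun p q => ((x p.1 * x p.2 * x q.1 * x q.2 : ℝ) : ℂ)

open Matrix

section Scatter

variable {ι m R : Type*} [Fintype ι] [CommRing R] [StarRing R]

/-- `n` times the scatter matrix `∑ (aᵢ - ā)(aᵢ - ā)*` of the `n` vectors `aᵢ`. -/
def scatter (a : ι → m → R) : Matrix m m R :=
  (Fintype.card ι : R) • ∑ i, vecMulVec (a i) (star (a i)) -
    vecMulVec (∑ i, a i) (star (∑ i, a i))

theorem scatter_sub_const (a : ι → m → R) (v : m → R) :
    scatter (fun i => a i - v) = scatter a := by
  ext p q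
  simp only [scatter, Matrix.smul_apply, Matrix.sub_apply, Matrix.sum_apply, vecMulVec_apply,
    Finset.sum_apply, Pi.star_apply, star_sub, Pi.sub_apply, smul_eq_mul, mul_sub, sub_mul,
    Finset.sum_sub_distrib, Finset.sum_const, Finset.card_univ, nsmul_eq_mul, star_sum,
    Pi.mul_apply, Pi.natCast_apply, star_mul', star_natCast, ← Finset.mul_sum, ← Finset.sum_mul]
  ring

theorem two_smul_scatter (a : ι → m → R) :
    (2 : R) • scatter a = ∑ i, ∑ j, vecMulVec (a i - a j) (star (a i - a j)) := by
  ext p q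
  simp only [scatter, Matrix.smul_apply, Matrix.sub_apply, Matrix.sum_apply, vecMulVec_apply,
    Finset.sum_apply, Pi.star_apply, star_sub, Pi.sub_apply, smul_eq_mul, mul_sub, sub_mul,
    Finset.sum_sub_distrib, Finset.sum_const, Finset.card_univ, nsmul_eq_mul, Finset.sum_mul_sum,
    star_sum]
  rw [Finset.sum_comm (f := fun i j => a j p * star (a i q))]
  simp only [← Finset.mul_sum]
  ring

theorem scatter_mulVec_eq_zero [Fintype m] {a : ι → m → R} {w : m → R} {κ : R}
    (h : ∀ i, star (a i) ⬝ᵥ w = κ) : scatter a *ᵥ w = 0 := by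
  have hs : star (∑ i, a i) ⬝ᵥ w = Fintype.card ι * κ := by
    simp [star_sum, sum_dotProduct, h]
  simp only [scatter, sub_mulVec, smul_mulVec, sum_mulVec, vecMulVec_mulVec, h, hs,
    op_smul_eq_smul, ← Finset.smul_sum, smul_smul, mul_comm, sub_self]

theorem posSemidef_scatter {𝕜 : Type*} [RCLike 𝕜] [Fintype m] (a : ι → m → 𝕜) :
    (scatter a).PosSemidef := by
  have h2 : ((2 : 𝕜) • scatter a).PosSemidef := by
    rw [two_smul_scatter]
    exact posSemidef_sum _ fun i _ => posSemidef_sum _ fun j _ => posSemidef_vecMulVec_self_star _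
  simpa [smul_smul] using h2.smul (show (0 : 𝕜) ≤ 2⁻¹ by positivity)

/-- The Laplacian of the complete graph on `n + 1` vertices, with one vertex deleted. -/
def reducedLaplacian (n : ℕ) : Matrix (Fin n) (Fin n) R :=
  ((n : R) + 1) • 1 - vecMulVec 1 1

def diffFromLast {n : ℕ} (a : Fin (n + 1) → m → R) : Matrix m (Fin n) R :=
  of fun p i => a i.castSucc p - a (Fin.last n) p

theorem scatter_eq_diffFromLast_mul {n : ℕ} [Fintype m] (a : Fin (n + 1) → m → R) :
    scatter a = diffFromLast a * (reducedLaplacian n : Matrix (Fin n) (Fin n) R) *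
      (diffFromLast a)ᴴ := by
  rw [← scatter_sub_const a (a (Fin.last n))]
  set b : Fin (n + 1) → m → R := fun i => a i - a (Fin.last n)
  have hlast : b (Fin.last n) = 0 := sub_self _
  have hdiff : ∀ p i, diffFromLast a p i = b i.castSucc p := fun _ _ => rfl
  ext p q
  simp only [scatter, reducedLaplacian, Fin.sum_univ_castSucc, hlast, hdiff, star_zero,
    vecMulVec_zero, add_zero, mul_apply, Finset.sum_apply, Matrix.sub_apply, Matrix.smul_apply,
    Matrix.sum_apply, vecMulVec_apply, conjTranspose_apply,
    one_apply, Pi.star_apply, smul_eq_mul, mul_sub, sub_mul, mul_ite, mul_one, mul_zero,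
    Finset.sum_sub_distrib, Finset.sum_ite_eq', Finset.mem_univ, if_true, Fintype.card_fin,
    Nat.cast_add, Nat.cast_one, Pi.one_apply, star_sum, Finset.mul_sum]
  congr 1
  exact Finset.sum_congr rfl fun i _ => by ring

end Scatter

section Rank

variable {m K : Type*} [Fintype m] [Field K]

theorem rank_mul_mul_conjTranspose_of_mul_eq_one [StarRing K] {n : Type*} [Fintype n]
    [DecidableEq n] {B : Matrix m n K} {L : Matrix n m K} (hL : L * B = 1) (M : Matrix n n K) :
    (B * M * Bᴴ).rank = M.rank := by
  refine le_antisymm ((rank_mul_le_left _ _).trans (rank_mul_le_right _ _)) ?_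
  have hM : M = L * (B * M * Bᴴ) * Lᴴ := by
    rw [← Matrix.mul_assoc, ← Matrix.mul_assoc, hL, Matrix.one_mul, Matrix.mul_assoc,
      ← conjTranspose_mul, hL, conjTranspose_one, Matrix.mul_one]
  calc M.rank = (L * (B * M * Bᴴ) * Lᴴ).rank := by rw [← hM]
    _ ≤ (B * M * Bᴴ).rank := (rank_mul_le_left _ _).trans (rank_mul_le_right _ _)

theorem vecMulVec_one_mul_self {R : Type*} [CommSemiring R] (n : ℕ) :
    (vecMulVec 1 1 : Matrix (Fin n) (Fin n) R) * vecMulVec 1 1 = (n : R) • vecMulVec 1 1 := by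
  ext i j
  simp [mul_apply]

theorem reducedLaplacian_mul (n : ℕ) :
    (reducedLaplacian n : Matrix (Fin n) (Fin n) K) * (1 + vecMulVec 1 1) = ((n : K) + 1) • 1 := by
  rw [reducedLaplacian, sub_mul, Matrix.smul_mul, Matrix.one_mul, Matrix.mul_add, Matrix.mul_one,
    vecMulVec_one_mul_self]
  module

theorem rank_reducedLaplacian [CharZero K] (n : ℕ) :
    (reducedLaplacian n : Matrix (Fin n) (Fin n) K).rank = n := by
  have hn : (n : K) + 1 ≠ 0 := by exact_mod_cast Nat.succ_ne_zero n
  have hinv : (reducedLaplacian n : Matrix (Fin n) (Fin n) K) *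
      (((n : K) + 1)⁻¹ • (1 + vecMulVec 1 1)) = 1 := by
    rw [Matrix.mul_smul, reducedLaplacian_mul, smul_smul, inv_mul_cancel₀ hn, one_smul]
  rw [rank_of_isUnit _ ((isUnit_iff_isUnit_det _).mpr (isUnit_det_of_right_inverse hinv)),
    Fintype.card_fin]

theorem rank_scatter [StarRing K] [CharZero K] {n : ℕ} (a : Fin (n + 1) → m → K)
    {L : Matrix (Fin n) m K} (hL : L * diffFromLast a = 1) : (scatter a).rank = n := by
  rw [scatter_eq_diffFromLast_mul, rank_mul_mul_conjTranspose_of_mul_eq_one hL,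
    rank_reducedLaplacian]

end Rank

section ProductVector

variable {n R : Type*}

def productVector [Mul R] (u v : n → R) : n × n → R := fun p => u p.1 * v p.2

theorem star_productVector [CommRing R] [StarRing R] (u v : n → R) :
    star (productVector u v) = productVector (star u) (star v) := by
  ext p
  simp [productVector]

theorem productVector_dotProduct_uncurry [Fintype n] [CommSemiring R] (u v : n → R)
    (W : Matrix n n R) : productVector u v ⬝ᵥ Function.uncurry W = u ⬝ᵥ W *ᵥ v := by
  simp only [dotProduct, productVector, mulVec, Fintype.sum_prod_type, Finset.mul_sum]
  exact Finset.sum_congr rfl fun _ _ => Finset.sum_congr rfl fun _ _ => by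
    simp only [Function.uncurry]; ring

theorem dotProduct_single_sub_single_mulVec [Fintype n] [DecidableEq n] [CommRing R]
    (u v : n → R) (j l : n) :
    u ⬝ᵥ (single j l 1 - single l j 1) *ᵥ v = u j * v l - u l * v j := by
  simp [sub_mulVec, dotProduct_sub, single_mulVec_eq, dotProduct_single, mul_comm]

theorem exists_eq_smul_of_mul_eq_mul [Field R] {u v : n → R} (hu : u ≠ 0)
    (h : ∀ j l, u j * v l = u l * v j) : ∃ μ : R, v = μ • u := by
  obtain ⟨j, hj⟩ := Function.ne_iff.mp hu
  rw [Pi.zero_apply] at hj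
  refine ⟨v j / u j, funext fun l => ?_⟩
  simp only [Pi.smul_apply, smul_eq_mul]
  field_simp
  linear_combination h j l

theorem star_dotProduct_eq_zero_of_sum_vecMulVec_mulVec_eq_zero {ι 𝕜 : Type*} [Fintype ι]
    [Fintype n] [RCLike 𝕜] (z : ι → n → 𝕜) {w : n → 𝕜}
    (hw : (∑ t, vecMulVec (z t) (star (z t))) *ᵥ w = 0) (t : ι) : star (z t) ⬝ᵥ w = 0 := by
  set c : ι → 𝕜 := fun t => star (z t) ⬝ᵥ w
  have hc : star c ⬝ᵥ c = 0 := by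
    have := congrArg (star w ⬝ᵥ ·) hw
    simp only [sum_mulVec, vecMulVec_mulVec, op_smul_eq_smul, dotProduct_sum, dotProduct_smul,
      dotProduct_zero, smul_eq_mul] at this
    rw [← this, dotProduct_comm]
    refine Finset.sum_congr rfl fun s _ => ?_
    simp [c, star_dotProduct w (z s)]
  exact congrFun (dotProduct_star_self_eq_zero.mp hc) t

end ProductVector

section CompletelySymmetric

theorem isCS2_Pmat (x : Fin 4 → ℝ) : IsCS2 (Pmat x) := by
  intro π f
  have h := Equiv.prod_comp π (fun j => x (f j))
  simp only [Fin.prod_univ_four] at h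
  simp only [Pmat, h]

theorem IsCS2.smul {ρ : Matrix (Fin 4 × Fin 4) (Fin 4 × Fin 4) ℂ} (h : IsCS2 ρ) (c : ℂ) :
    IsCS2 (c • ρ) := fun π f => by simp only [Matrix.smul_apply, h π f]

theorem IsCS2.sub {ρ σ : Matrix (Fin 4 × Fin 4) (Fin 4 × Fin 4) ℂ} (hρ : IsCS2 ρ)
    (hσ : IsCS2 σ) : IsCS2 (ρ - σ) := fun π f => by simp only [Matrix.sub_apply, hρ π f, hσ π f]

theorem isCS2_sum {ι : Type*} (s : Finset ι) {ρ : ι → Matrix (Fin 4 × Fin 4) (Fin 4 × Fin 4) ℂ}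
    (h : ∀ i ∈ s, IsCS2 (ρ i)) : IsCS2 (∑ i ∈ s, ρ i) := fun π f => by
  simp only [Matrix.sum_apply]
  exact Finset.sum_congr rfl fun i hi => h i hi π f

end CompletelySymmetric

/-- `h1`, `h2`, `h3` cut out the eight lines `ℂxᵢ` (for `a = 1`, `h1` and `h3` force
`d = b(1 + c)/2` and `b(c - 1)(c - 3) = 0`), and `h4` fails on each of them. -/
theorem eq_zero_of_quadrics {K : Type*} [Field K] [CharZero K] {a b c d : K}
    (h1 : a * b - 2 * a * d + b * c = 0) (h2 : 15 * a * b - 16 * a * c - 5 * b * c + 6 * b * d = 0)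
    (h3 : 3 * a * b - 5 * b * c + 2 * c * d = 0)
    (h4 : -12 * a ^ 2 + 81 * a * b - 32 * a * c - 6 * b ^ 2 - 27 * b * c + 4 * c ^ 2 + 3 * d ^ 2
      = 0) :
    a = 0 ∧ b = 0 ∧ c = 0 ∧ d = 0 := by
  by_cases ha : a = 0
  · subst ha
    have hbc : b * c = 0 := by linear_combination h1
    have hcd : c * d = 0 := by linear_combination (h3 + 5 * h1) / 2
    have hbd : b * d = 0 := by linear_combination (h2 + 5 * h1) / 6
    refine ⟨rfl, eq_zero_of_pow_eq_zero (n := 3) ?_, eq_zero_of_pow_eq_zero (n := 3) ?_,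
      eq_zero_of_pow_eq_zero (n := 3) ?_⟩
    · linear_combination -(b * h4 + 27 * b * hbc - 4 * c * hbc - 3 * d * hbd) / 6
    · linear_combination (c * h4 + 6 * b * hbc + 27 * c * hbc - 3 * d * hcd) / 4
    · linear_combination (d * h4 + 6 * b * hbd + 27 * d * hbc - 4 * c * hcd) / 3
  exfalso
  apply ha
  have hfactor : b * ((a - c) * (3 * a - c)) = 0 := by linear_combination a * h3 + c * h1
  rcases mul_eq_zero.mp hfactor with hb | hac
  · subst hb
    have hd : d = 0 := (mul_eq_zero.mp (by linear_combination -h1 / 2 : a * d = 0)).resolve_left ha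
    have hc : c = 0 := (mul_eq_zero.mp (by linear_combination -h2 / 16 : a * c = 0)).resolve_left ha
    subst hd hc
    exact sq_eq_zero_iff.mp (by linear_combination -h4 / 12)
  rcases mul_eq_zero.mp hac with hc | hc
  · obtain rfl : a = c := sub_eq_zero.mp hc
    obtain rfl : b = d := by
      have : a * (b - d) = 0 := by linear_combination h1 / 2
      exact sub_eq_zero.mp ((mul_eq_zero.mp this).resolve_left ha)
    have h2' : (b - a) * (3 * b + 8 * a) = 0 := by linear_combination h2 / 2
    rcases mul_eq_zero.mp h2' with hb | hb
    · obtain rfl : a = b := (sub_eq_zero.mp hb).symm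
      exact sq_eq_zero_iff.mp (by linear_combination h4 / 11)
    · exact sq_eq_zero_iff.mp (by linear_combination (-3 * h4 + (62 * a - 3 * b) * hb) / 616)
  · obtain rfl : c = 3 * a := by linear_combination -hc
    obtain rfl : d = 2 * b := by
      have : a * (2 * b - d) = 0 := by linear_combination h1 / 2
      exact (sub_eq_zero.mp ((mul_eq_zero.mp this).resolve_left ha)).symm
    exact sq_eq_zero_iff.mp (by linear_combination (h2 / 12 - h4 / 6) / 8)

def weight : Fin 7 → ℤ := ![44, 88, -132, -176, -48, 11, 11]

theorem weight_ne_zero (i : Fin 7) : weight i ≠ 0 := by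
  fin_cases i <;> decide

noncomputable def point (i : Fin 8) : Fin 4 → ℂ := fun j => (xv i j : ℂ)

noncomputable def weightedSquare (i : Fin 7) : Fin 4 × Fin 4 → ℂ :=
  (weight i : ℂ) • productVector (point i.castSucc) (point i.castSucc)

theorem sum_weightedSquare :
    ∑ i, weightedSquare i = (18 : ℂ) • productVector (point 7) (point 7) := by
  ext ⟨j, l⟩
  fin_cases j <;> fin_cases l <;>
    simp [Fin.sum_univ_seven, weightedSquare, productVector, point, xv, weight] <;> norm_num

theorem star_productVector_point (i : Fin 8) :
    star (productVector (point i) (point i)) = productVector (point i) (point i) := by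
  ext p
  simp [productVector, point]

theorem star_weightedSquare (i : Fin 7) : star (weightedSquare i) = weightedSquare i := by
  rw [weightedSquare, star_smul, star_productVector_point, star_intCast]

theorem Pmat_eq_vecMulVec (i : Fin 8) :
    Pmat (xv i) =
      vecMulVec (productVector (point i) (point i)) (productVector (point i) (point i)) := by
  ext p q
  simp only [Pmat, vecMulVec_apply, productVector, point]
  push_cast
  ring

theorem sum_smul_Pmat_sub_eq_scatter :
    (∑ i : Fin 7, ((7 * (weight i : ℝ) ^ 2 : ℝ) : ℂ) • Pmat (xv i.castSucc)) -
      ((324 : ℝ) : ℂ) • Pmat (xv 7) = scatter weightedSquare := by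
  rw [scatter, Fintype.card_fin, sum_weightedSquare]
  simp only [star_smul, star_productVector_point, Pmat_eq_vecMulVec,
    weightedSquare, smul_vecMulVec, vecMulVec_smul, Finset.smul_sum, smul_smul, star_intCast]
  push_cast
  congr 1
  · exact Finset.sum_congr rfl fun i _ => by ring_nf
  · norm_num

theorem trace_scatter_weightedSquare : (scatter weightedSquare).trace = 2103944 := by
  rw [← sum_smul_Pmat_sub_eq_scatter]
  simp [Matrix.trace, Pmat, Fintype.sum_prod_type, Fin.sum_univ_four, Fin.sum_univ_seven, xv,
    weight]
  norm_num

theorem weightedSquare_dotProduct_uncurry (i : Fin 7) (T : Matrix (Fin 4) (Fin 4) ℂ) :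
    weightedSquare i ⬝ᵥ Function.uncurry T =
      weight i * (point i.castSucc ⬝ᵥ T *ᵥ point i.castSucc) := by
  rw [weightedSquare, smul_dotProduct, productVector_dotProduct_uncurry, smul_eq_mul]

/-- Found by inverting the minor of `diffFromLast weightedSquare` on the coordinates `(0,0), (0,1),
(0,2), (0,3), (1,1), (2,2)`. -/
def dualQuadric : Fin 6 → Matrix (Fin 4) (Fin 4) ℂ :=
  ![!![12, -16, -4, 8; 0, 0, 0, 0; 0, 0, 0, 0; 0, 0, 0, 0],
    !![0, 4, -8, -2; 0, 6, 0, 0; 0, 0, 0, 0; 0, 0, 0, 0],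
    !![0, -16, 12, 8; 0, 0, 0, 0; 0, 0, -4, 0; 0, 0, 0, 0],
    !![0, 1, 16, -41; 0, 0, 27, 0; 0, 0, 0, 0; 0, 0, 0, -3],
    !![0, -22, 0, 11; 0, 0, 0, 0; 0, 0, 0, 0; 0, 0, 0, 0],
    !![0, -28, 8, 20; 0, 0, 0, 0; 0, 0, 0, 0; 0, 0, 0, 0]]

theorem dualQuadric_values (r : Fin 6) (i : Fin 7) :
    (weight i : ℂ) * (point i.castSucc ⬝ᵥ dualQuadric r *ᵥ point i.castSucc) =
      if i = r.castSucc then 528 else 0 := by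
  fin_cases r <;> fin_cases i <;>
    simp [dualQuadric, point, xv, weight, dotProduct, mulVec, Fin.sum_univ_four] <;> norm_num

noncomputable def leftInverse : Matrix (Fin 6) (Fin 4 × Fin 4) ℂ :=
  of fun r => (528 : ℂ)⁻¹ • Function.uncurry (dualQuadric r)

theorem leftInverse_mul_diffFromLast : leftInverse * diffFromLast weightedSquare = 1 := by
  ext r i
  have hL : leftInverse r = (528 : ℂ)⁻¹ • Function.uncurry (dualQuadric r) := rfl
  have hB : (fun p => diffFromLast weightedSquare p i) =
      weightedSquare i.castSucc - weightedSquare (Fin.last 6) := rfl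
  rw [mul_apply, ← dotProduct, hL, hB, smul_dotProduct, dotProduct_comm, sub_dotProduct,
    weightedSquare_dotProduct_uncurry, weightedSquare_dotProduct_uncurry, dualQuadric_values,
    dualQuadric_values, if_neg (Fin.castSucc_lt_last r).ne', one_apply]
  rcases eq_or_ne i r with rfl | h
  · simp
  · simp [h, h.symm]

theorem rank_scatter_weightedSquare : (scatter weightedSquare).rank = 6 :=
  rank_scatter weightedSquare leftInverse_mul_diffFromLast

/-- As `cᵢ qₖ(xᵢ)` does not depend on `i` (`quadric_values`), `Function.uncurry (quadric k)` lies
in the kernel of the state. -/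
def quadric : Fin 4 → Matrix (Fin 4) (Fin 4) ℂ :=
  ![!![0, 1, 0, -2; 0, 0, 1, 0; 0, 0, 0, 0; 0, 0, 0, 0],
    !![0, 15, -16, 0; 0, 0, -5, 6; 0, 0, 0, 0; 0, 0, 0, 0],
    !![0, 3, 0, 0; 0, 0, -5, 0; 0, 0, 0, 2; 0, 0, 0, 0],
    !![-12, 81, -32, 0; 0, -6, -27, 0; 0, 0, 4, 0; 0, 0, 0, 3]]

theorem quadric_values (k : Fin 4) (i : Fin 7) :
    (weight i : ℂ) * (point i.castSucc ⬝ᵥ quadric k *ᵥ point i.castSucc) = ![0, 0, 0, -528] k := by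
  fin_cases k <;> fin_cases i <;>
    simp [quadric, point, xv, weight, dotProduct, mulVec, Fin.sum_univ_four] <;> norm_num

theorem eq_zero_of_forall_quadric_eq_zero {u : Fin 4 → ℂ} (hq : ∀ k, u ⬝ᵥ quadric k *ᵥ u = 0) :
    u = 0 := by
  have h1 := hq 0
  have h2 := hq 1
  have h3 := hq 2
  have h4 := hq 3
  simp only [dotProduct, mulVec, quadric, Fin.isValue, cons_val_zero, of_apply, cons_val',
    cons_val_fin_one, Fin.sum_univ_four, cons_val_one, cons_val, zero_mul, one_mul, zero_add,
    add_zero, neg_mul, mul_zero, mul_neg] at h1 h2 h3 h4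
  obtain ⟨h0, h1, h2, h3⟩ := eq_zero_of_quadrics (a := u 0) (b := u 1) (c := u 2) (d := u 3)
    (by linear_combination h1) (by linear_combination h2) (by linear_combination h3)
    (by linear_combination h4)
  ext j
  fin_cases j <;> assumption

theorem eq_zero_of_bilin_kernel_eq_zero {u v : Fin 4 → ℂ} (hv : v ≠ 0)
    (hanti : ∀ j l, u ⬝ᵥ (single j l 1 - single l j 1) *ᵥ v = 0)
    (hq : ∀ k, u ⬝ᵥ quadric k *ᵥ v = 0) : u = 0 := by
  by_contra hu
  obtain ⟨μ, rfl⟩ := exists_eq_smul_of_mul_eq_mul hu fun j l => by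
    simpa [dotProduct_single_sub_single_mulVec, sub_eq_zero] using hanti j l
  have hμ : μ ≠ 0 := by rintro rfl; simp at hv
  exact hu (eq_zero_of_forall_quadric_eq_zero fun k => by simpa [mulVec_smul, hμ] using hq k)

theorem scatter_weightedSquare_mulVec_eq_zero {T : Matrix (Fin 4) (Fin 4) ℂ} {κ : ℂ}
    (hT : ∀ i, (weight i : ℂ) * (point i.castSucc ⬝ᵥ T *ᵥ point i.castSucc) = κ) :
    scatter weightedSquare *ᵥ Function.uncurry T = 0 :=
  scatter_mulVec_eq_zero fun i => by rw [star_weightedSquare, weightedSquare_dotProduct_uncurry, hT]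

theorem not_sep2_smul_scatter_weightedSquare {c : ℂ} (hc : c ≠ 0) :
    ¬ Sep2 (c • scatter weightedSquare) := by
  rintro ⟨m, x, y, hx, hy, hsep⟩
  have hρ : c • scatter weightedSquare =
      ∑ t, vecMulVec (productVector (x t) (y t)) (star (productVector (x t) (y t))) := by
    ext ⟨i, k⟩ ⟨j, l⟩
    simp [hsep, Matrix.sum_apply, vecMulVec_apply, productVector]
  have hker : ∀ (T : Matrix (Fin 4) (Fin 4) ℂ) (κ : ℂ),
      (∀ i, (weight i : ℂ) * (point i.castSucc ⬝ᵥ T *ᵥ point i.castSucc) = κ) →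
        ∀ t, star (x t) ⬝ᵥ T *ᵥ star (y t) = 0 := by
    intro T κ hT t
    have hw : (∑ t, vecMulVec (productVector (x t) (y t)) (star (productVector (x t) (y t)))) *ᵥ
        Function.uncurry T = 0 := by
      rw [← hρ, smul_mulVec, scatter_weightedSquare_mulVec_eq_zero hT, smul_zero]
    have := star_dotProduct_eq_zero_of_sum_vecMulVec_mulVec_eq_zero _ hw t
    rwa [star_productVector, productVector_dotProduct_uncurry] at this
  obtain hm | ⟨⟨t⟩⟩ := isEmpty_or_nonempty (Fin m)
  · have : scatter weightedSquare = 0 := by simpa [hc] using hρ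
    simpa [this] using rank_scatter_weightedSquare
  refine hx t (star_eq_zero.mp (eq_zero_of_bilin_kernel_eq_zero (star_ne_zero.mpr (hy t))
    (fun j l => hker _ 0 (fun i => ?_) t) fun k => hker _ _ (quadric_values k) t))
  rw [dotProduct_single_sub_single_mulVec, mul_comm (point _ j), sub_self, mul_zero]

/-- There is an entangled CS state of rank six on `ℂ⁴ ⊗ ℂ⁴`, of the concrete form
`ρ = ∑_{i<7} λ_i P_{x_i} − λ P_{x_7}`. -/
theorem stmt_10 :
    ∃ (lam : Fin 7 → ℝ) (l : ℝ), (∀ i, 0 < lam i) ∧ 0 < l ∧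
      ∀ ρ : Matrix (Fin 4 × Fin 4) (Fin 4 × Fin 4) ℂ,
        ρ = (∑ i : Fin 7, (lam i : ℂ) • Pmat (xv i.castSucc)) - (l : ℂ) • Pmat (xv 7) →
          ρ.PosSemidef ∧ ρ.rank = 6 ∧
          IsCS2 (ρ.trace⁻¹ • ρ) ∧ (ρ.trace⁻¹ • ρ).trace = 1 ∧
          (ρ.trace⁻¹ • ρ).PosSemidef ∧ ¬ Sep2 (ρ.trace⁻¹ • ρ) := by
  refine ⟨fun i => 7 * (weight i : ℝ) ^ 2, 324, fun i => ?_, by norm_num, ?_⟩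
  · have := weight_ne_zero i
    positivity
  rintro ρ rfl
  have hcs : IsCS2 ((∑ i : Fin 7, ((7 * (weight i : ℝ) ^ 2 : ℝ) : ℂ) • Pmat (xv i.castSucc)) -
      ((324 : ℝ) : ℂ) • Pmat (xv 7)) :=
    (isCS2_sum _ fun i _ => (isCS2_Pmat _).smul _).sub ((isCS2_Pmat _).smul _)
  beta_reduce
  rw [sum_smul_Pmat_sub_eq_scatter] at hcs ⊢
  have hpsd := posSemidef_scatter weightedSquare
  rw [trace_scatter_weightedSquare]
  refine ⟨hpsd, rank_scatter_weightedSquare, hcs.smul _, ?_, hpsd.smul (by positivity),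
    not_sep2_smul_scatter_weightedSquare (by norm_num)⟩
  rw [trace_smul, trace_scatter_weightedSquare]
  norm_num
end

section
/- A real Hankel matrix is positive semidefinite if and only if it is a positive combination of moment vectors: let M be an N×N real matrix that is Hankel, i.e. there is a : Fin (2N−1) → ℝ with M(i,j) = a(i+j) for all i,j. Then M is positive semidefinite if and only if there exist r = rank M, positive reals λ_1,…,λ_r, and vectors z_1,…,z_r ∈ ℝ^N, each z_i being either of the form z_i = (1, t_i, t_i², …, t_i^{N−1}) for some t_i ∈ ℝ or equal to the last standard basis vector e_{N−1} = (0,…,0,1), such that M = ∑_{i=1}^{r} λ_i · z_i z_iᵀ. -/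
/-!
Sufficiency holds because every `z zᵀ` is positive semidefinite. For necessity we induct on the
rank: if some admissible `z` lies in the range of `M`, say `z = M w`, then
`M - (wᵀ M w)⁻¹ z zᵀ` is again a positive semidefinite Hankel matrix, of rank one less.

To find such a `z`, identify `x ∈ ℝᴺ` with the polynomial `∑ xᵢ Xⁱ`. Then `xᵀ M y = L (x y)` for
the moment functional `L (Xᵏ) = a k`, and the range of `M` is the orthogonal complement of the
space `K` of polynomials coming from `ker M`. If no element of `K` has degree `N - 1`, then
`e_{N-1} ⊥ K`. Otherwise let `P` be a monic element of `K` of least degree. Since `L` is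
nonnegative on squares, `L (f²) = 0` forces `f ∈ K`; this shows that `P` divides every element
of `K` (apply it to the remainder) and that `P` has a real root `t` (a non-real root gives
`P = ((X - α)² + β²) h` with `L (h²) = 0` and `deg h < deg P`), so `(tⁱ)ᵢ ⊥ K`. Finally `P`
is not constant unless `M = 0`: from `1 ∈ K` the shift `L ((X f)²) = L (f · X² f)` gives
`Xʲ ∈ K` for `j ≤ N - 2`, and with the element of degree `N - 1` all of `ℝᴺ` is in `ker M`.
-/

open Polynomial Matrix

namespace Matrix

section Field

variable {m n K : Type*} [Fintype n] [Field K]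

theorem rank_add_le (A B : Matrix m n K) : (A + B).rank ≤ A.rank + B.rank := by
  unfold rank
  rw [mulVecLin_add]
  exact (Submodule.finrank_mono (LinearMap.range_add_le _ _)).trans
    (Submodule.finrank_add_le_finrank_add_finrank _ _)

theorem rank_eq_zero_iff {A : Matrix m n K} : A.rank = 0 ↔ A = 0 := by
  classical
  refine ⟨fun h => ?_, fun h => h ▸ rank_zero⟩
  rw [rank, Submodule.finrank_eq_zero, LinearMap.range_eq_bot, ← toLin'_apply'] at h
  exact toLin'.map_eq_zero_iff.1 h

end Field

section Real

variable {n : Type*} [Fintype n] {M : Matrix n n ℝ}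

theorem posSemidef_iff_forall_dotProduct_mulVec_nonneg (hM : Mᵀ = M) :
    M.PosSemidef ↔ ∀ x, 0 ≤ x ⬝ᵥ M *ᵥ x := by
  simp [posSemidef_iff_dotProduct_mulVec, IsHermitian, conjTranspose_eq_transpose_of_trivial, hM]

theorem PosSemidef.dotProduct_mulVec_self_nonneg (hM : M.PosSemidef) (x : n → ℝ) :
    0 ≤ x ⬝ᵥ M *ᵥ x := by
  simpa using hM.dotProduct_mulVec_nonneg x

theorem IsHermitian.mulVec_dotProduct (hM : M.IsHermitian) (w x : n → ℝ) :
    M *ᵥ w ⬝ᵥ x = w ⬝ᵥ M *ᵥ x := by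
  rw [dotProduct_mulVec, ← mulVec_transpose, ← conjTranspose_eq_transpose_of_trivial, hM.eq,
    dotProduct_comm]

theorem IsHermitian.exists_mulVec_eq [DecidableEq n] (hM : M.IsHermitian) {z : n → ℝ}
    (hz : ∀ x, M *ᵥ x = 0 → z ⬝ᵥ x = 0) : ∃ w, M *ᵥ w = z := by
  have hz' : WithLp.toLp 2 z ∈ (LinearMap.range (toEuclideanLin M))ᗮᗮ := by
    rw [(isSymmetric_toEuclideanLin_iff.mpr hM).orthogonal_range, Submodule.mem_orthogonal]
    intro u hu
    rw [EuclideanSpace.inner_eq_star_dotProduct, star_trivial]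
    exact hz u.ofLp (congrArg WithLp.ofLp (LinearMap.mem_ker.mp hu))
  obtain ⟨w, hw⟩ := (Submodule.orthogonal_orthogonal (LinearMap.range (toEuclideanLin M))).le hz'
  exact ⟨w.ofLp, congrArg WithLp.ofLp hw⟩

theorem PosSemidef.sq_dotProduct_mulVec_le (hM : M.PosSemidef) (w x : n → ℝ) :
    (w ⬝ᵥ M *ᵥ x) ^ 2 ≤ (w ⬝ᵥ M *ᵥ w) * (x ⬝ᵥ M *ᵥ x) := by
  classical
  have := LinearMap.BilinForm.apply_mul_apply_le_of_forall_zero_le (toLinearMap₂' ℝ M)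
    (by simpa [toLinearMap₂'_apply'] using hM.dotProduct_mulVec_self_nonneg) w x
  simp only [toLinearMap₂'_apply'] at this
  rwa [dotProduct_comm x, hM.isHermitian.mulVec_dotProduct, ← sq] at this

theorem PosSemidef.dotProduct_mulVec_pos (hM : M.PosSemidef) {w : n → ℝ} (hw : M *ᵥ w ≠ 0) :
    0 < w ⬝ᵥ M *ᵥ w := by
  refine (hM.dotProduct_mulVec_self_nonneg w).lt_of_ne' fun h => hw ?_
  simpa using (hM.dotProduct_mulVec_zero_iff w).1 (by simpa using h)

/-- If `wᵀ M w = 0`, the coefficient is the junk value `0⁻¹ = 0`, so `w` is arbitrary. -/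
theorem PosSemidef.sub_smul_vecMulVec_mulVec (hM : M.PosSemidef) (w : n → ℝ) :
    (M - (w ⬝ᵥ M *ᵥ w)⁻¹ • vecMulVec (M *ᵥ w) (M *ᵥ w)).PosSemidef := by
  have hc : 0 ≤ (w ⬝ᵥ M *ᵥ w)⁻¹ := inv_nonneg.2 (hM.dotProduct_mulVec_self_nonneg w)
  refine .of_dotProduct_mulVec_nonneg ?_ fun x => ?_
  · simpa using hM.isHermitian.sub ((posSemidef_vecMulVec_self_star (M *ᵥ w)).smul hc).isHermitian
  · have hcs := inv_mul_le_of_le_mul₀ (hM.dotProduct_mulVec_self_nonneg w)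
      (hM.dotProduct_mulVec_self_nonneg x) (hM.sq_dotProduct_mulVec_le w x)
    rw [sub_mulVec, smul_mulVec, vecMulVec_mulVec, op_smul_eq_smul, star_trivial,
      dotProduct_sub, dotProduct_smul, dotProduct_smul, dotProduct_comm x (M *ᵥ w),
      hM.isHermitian.mulVec_dotProduct, smul_eq_mul, smul_eq_mul, ← sq]
    linarith

theorem PosSemidef.rank_sub_smul_vecMulVec_mulVec_add_one (hM : M.PosSemidef) {w : n → ℝ}
    (hw : M *ᵥ w ≠ 0) :
    (M - (w ⬝ᵥ M *ᵥ w)⁻¹ • vecMulVec (M *ᵥ w) (M *ᵥ w)).rank + 1 = M.rank := by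
  have hM₁ := hM.sub_smul_vecMulVec_mulVec w
  set c := w ⬝ᵥ M *ᵥ w
  set M₁ := M - c⁻¹ • vecMulVec (M *ᵥ w) (M *ᵥ w)
  have hc : c ≠ 0 := (hM.dotProduct_mulVec_pos hw).ne'
  have hM₁w : M₁ *ᵥ w = 0 := by
    rw [sub_mulVec, smul_mulVec, vecMulVec_mulVec, op_smul_eq_smul,
      hM.isHermitian.mulVec_dotProduct, smul_smul, inv_mul_cancel₀ hc, one_smul, sub_self]
  have hle : M.rank ≤ M₁.rank + 1 :=
    calc M.rank = (M₁ + c⁻¹ • vecMulVec (M *ᵥ w) (M *ᵥ w)).rank := by rw [sub_add_cancel]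
      _ ≤ M₁.rank + (c⁻¹ • vecMulVec (M *ᵥ w) (M *ᵥ w)).rank := rank_add_le _ _
      _ ≤ M₁.rank + 1 := by
        rw [← smul_vecMulVec]
        exact Nat.add_le_add_left (rank_vecMulVec_le _ _) _
  have hlt : M₁.rank < M.rank := by
    refine Submodule.finrank_lt_finrank_of_lt
      (SetLike.lt_iff_le_and_exists.2 ⟨?_, M *ᵥ w, LinearMap.mem_range_self _ w, ?_⟩)
    · rintro _ ⟨x, rfl⟩
      exact ⟨x - (c⁻¹ * (M *ᵥ w ⬝ᵥ x)) • w, by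
        simp [M₁, mulVec_sub, mulVec_smul, vecMulVec_mulVec, smul_smul]⟩
    · rintro ⟨y, hy⟩
      apply hc
      rw [show c = M *ᵥ w ⬝ᵥ w from (hM.isHermitian.mulVec_dotProduct w w).symm, ← hy,
        mulVecLin_apply, dotProduct_comm,
        ← hM₁.isHermitian.mulVec_dotProduct, hM₁w, zero_dotProduct]
  omega

end Real

end Matrix

namespace Polynomial

/-- For the moment functional `L` of a Hankel matrix `M`, these are the polynomials whose
coefficient vectors lie in `ker M`. -/
def hankelKernel (L : ℝ[X] →ₗ[ℝ] ℝ) (N : ℕ) : Set ℝ[X] :=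
  {f | f.natDegree < N ∧ ∀ g : ℝ[X], g.natDegree < N → L (f * g) = 0}

variable {L : ℝ[X] →ₗ[ℝ] ℝ} {N : ℕ}

theorem mem_hankelKernel_of_apply_mul_self_eq_zero
    (hL : ∀ f : ℝ[X], f.natDegree < N → 0 ≤ L (f * f)) {f : ℝ[X]} (hf : f.natDegree < N)
    (h : L (f * f) = 0) : f ∈ hankelKernel L N := by
  refine ⟨hf, fun g hg => ?_⟩
  have hquad : ∀ c : ℝ, 0 ≤ L (g * g) * (c * c) + 2 * L (f * g) * c + 0 := fun c => by
    have hfg : (f + c • g).natDegree < N :=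
      (natDegree_add_le _ _).trans_lt (max_lt hf ((natDegree_smul_le _ _).trans_lt hg))
    have := hL _ hfg
    simp only [add_mul, mul_add, smul_mul_assoc, mul_smul_comm, map_add, map_smul, smul_eq_mul,
      mul_comm g f, h] at this
    linarith
  have := discrim_le_zero hquad
  rw [discrim] at this
  nlinarith [sq_nonneg (L (f * g))]

theorem C_mul_mem_hankelKernel (c : ℝ) {f : ℝ[X]} (hf : f ∈ hankelKernel L N) :
    C c * f ∈ hankelKernel L N := by
  refine ⟨(natDegree_C_mul_le c f).trans_lt hf.1, fun g hg => ?_⟩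
  rw [mul_assoc, ← smul_eq_C_mul, map_smul, hf.2 g hg, smul_zero]

theorem X_mul_mem_hankelKernel (hL : ∀ f : ℝ[X], f.natDegree < N → 0 ≤ L (f * f)) {f : ℝ[X]}
    (hf : f ∈ hankelKernel L N) (hdeg : f.natDegree + 2 < N) : X * f ∈ hankelKernel L N := by
  have hXf : (X * f).natDegree < N := by
    refine (natDegree_mul_le.trans ?_).trans_lt (show f.natDegree + 1 < N by omega)
    simp [add_comm]
  refine mem_hankelKernel_of_apply_mul_self_eq_zero hL hXf ?_
  rw [show X * f * (X * f) = f * (X ^ 2 * f) by ring]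
  refine hf.2 _ ((natDegree_mul_le.trans ?_).trans_lt hdeg)
  simp [add_comm]

theorem X_pow_mem_hankelKernel (hL : ∀ f : ℝ[X], f.natDegree < N → 0 ≤ L (f * f))
    (h1 : 1 ∈ hankelKernel L N) {j : ℕ} (hj : j + 2 ≤ N) : X ^ j ∈ hankelKernel L N := by
  induction j with
  | zero => simpa using h1
  | succ j ih =>
    rw [pow_succ']
    exact X_mul_mem_hankelKernel hL (ih (by omega)) (by rw [natDegree_X_pow]; omega)

theorem dvd_of_mem_hankelKernel (hL : ∀ f : ℝ[X], f.natDegree < N → 0 ≤ L (f * f))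
    {P q : ℝ[X]} (hP : P ∈ hankelKernel L N) (hPm : P.Monic)
    (hmin : ∀ f ∈ hankelKernel L N, f ≠ 0 → P.natDegree ≤ f.natDegree)
    (hq : q ∈ hankelKernel L N) : P ∣ q := by
  rw [← modByMonic_eq_zero_iff_dvd hPm]
  by_contra hs
  set s := q %ₘ P
  set g := q /ₘ P
  have hsP : s.natDegree < P.natDegree := natDegree_lt_natDegree hs (degree_modByMonic_lt q hPm)
  have hq0 : q ≠ 0 := by rintro rfl; exact hs (zero_modByMonic P)
  have hPq := hmin q hq hq0
  have hgs : (g * s).natDegree < N := by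
    refine (natDegree_mul_le.trans_lt ?_).trans hq.1
    rw [natDegree_divByMonic q hPm]
    omega
  have hss : s * s = q * s - P * (g * s) := by
    linear_combination s * modByMonic_add_div q P
  have hL0 : L (s * s) = 0 := by
    rw [hss, map_sub, hq.2 s (hsP.trans hP.1), hP.2 _ hgs, sub_zero]
  have := hmin s (mem_hankelKernel_of_apply_mul_self_eq_zero hL (hsP.trans hP.1) hL0) hs
  omega

theorem exists_eq_mul_of_forall_not_isRoot {P : ℝ[X]} (hdeg : 0 < P.natDegree)
    (hroot : ∀ t, ¬P.IsRoot t) :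
    ∃ α β : ℝ, β ≠ 0 ∧ ∃ h, P = ((X - C α) * (X - C α) + C (β ^ 2)) * h := by
  have hP0 : P ≠ 0 := by rintro rfl; simp at hdeg
  obtain ⟨z, hz⟩ := IsAlgClosed.exists_aeval_eq_zero ℂ P (by
    rw [degree_eq_natDegree hP0]; exact_mod_cast hdeg.ne')
  have him : z.im ≠ 0 := fun him => hroot z.re <| by
    rw [← Complex.re_add_im z, him, Complex.ofReal_zero, zero_mul, add_zero,
      ← Complex.coe_algebraMap, aeval_algebraMap_apply_eq_algebraMap_eval] at hz
    simpa using hz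
  obtain ⟨h, hPh⟩ := quadratic_dvd_of_aeval_eq_zero_im_ne_zero P hz him
  refine ⟨z.re, z.im, him, h, hPh.trans ?_⟩
  rw [Complex.sq_norm, Complex.normSq_apply]
  simp only [map_add, map_mul, map_pow, map_ofNat]
  ring

theorem exists_isRoot_of_mem_hankelKernel (hL : ∀ f : ℝ[X], f.natDegree < N → 0 ≤ L (f * f))
    {P : ℝ[X]} (hP : P ∈ hankelKernel L N)
    (hmin : ∀ f ∈ hankelKernel L N, f ≠ 0 → P.natDegree ≤ f.natDegree)
    (hdeg : 0 < P.natDegree) : ∃ t, P.IsRoot t := by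
  by_contra! hroot
  obtain ⟨α, β, hβ, h, hPh⟩ := exists_eq_mul_of_forall_not_isRoot hdeg hroot
  set u : ℝ[X] := X - C α
  have hh0 : h ≠ 0 := by rintro rfl; simp [hPh] at hdeg
  have hu : u.natDegree = 1 := natDegree_X_sub_C _
  have hQ : (u * u + C (β ^ 2)).natDegree = 2 := by
    rw [natDegree_add_C, natDegree_mul (X_sub_C_ne_zero _) (X_sub_C_ne_zero _), hu]
  have hPdeg : P.natDegree = h.natDegree + 2 := by
    rw [hPh, natDegree_mul (ne_zero_of_natDegree_gt (n := 0) (by omega)) hh0, hQ, add_comm]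
  have hhN : h.natDegree < N := by have := hP.1; omega
  have huhN : (u * h).natDegree < N := by
    rw [natDegree_mul (X_sub_C_ne_zero _) hh0, hu]; have := hP.1; omega
  have hsplit : L (P * h) = L (u * h * (u * h)) + β ^ 2 * L (h * h) := by
    rw [hPh, show (u * u + C (β ^ 2)) * h * h = u * h * (u * h) + β ^ 2 • (h * h) by
      rw [smul_eq_C_mul]; ring, map_add, map_smul, smul_eq_mul]
  have hhh : L (h * h) = 0 := by
    rw [hP.2 h hhN] at hsplit
    nlinarith [hL _ huhN, hL _ hhN, (by positivity : 0 < β ^ 2)]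
  have := hmin h (mem_hankelKernel_of_apply_mul_self_eq_zero hL hhN hhh) hh0
  omega

theorem exists_monic_minimal_mem_hankelKernel {q : ℝ[X]} (hq : q ∈ hankelKernel L N)
    (hq0 : q ≠ 0) : ∃ P ∈ hankelKernel L N, P.Monic ∧
      ∀ f ∈ hankelKernel L N, f ≠ 0 → P.natDegree ≤ f.natDegree := by
  classical
  have hex : ∃ d, ∃ f ∈ hankelKernel L N, f ≠ 0 ∧ f.natDegree = d := ⟨_, q, hq, hq0, rfl⟩
  obtain ⟨f, hf, hf0, hfd⟩ := Nat.find_spec hex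
  have hc : (f.leadingCoeff)⁻¹ ≠ 0 := inv_ne_zero (leadingCoeff_ne_zero.2 hf0)
  refine ⟨C f.leadingCoeff⁻¹ * f, C_mul_mem_hankelKernel _ hf,
    monic_C_mul_of_mul_leadingCoeff_eq_one (inv_mul_cancel₀ (leadingCoeff_ne_zero.2 hf0)),
    fun g hg hg0 => ?_⟩
  rw [natDegree_C_mul hc, hfd]
  exact Nat.find_min' hex ⟨g, hg, hg0, rfl⟩

theorem exists_forall_eval_eq_zero_of_mem_hankelKernel
    (hL : ∀ f : ℝ[X], f.natDegree < N → 0 ≤ L (f * f)) {q : ℝ[X]} (hq : q ∈ hankelKernel L N)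
    (hq0 : q ≠ 0) (h1 : 1 ∉ hankelKernel L N) : ∃ t, ∀ f ∈ hankelKernel L N, f.eval t = 0 := by
  obtain ⟨P, hP, hPm, hmin⟩ := exists_monic_minimal_mem_hankelKernel hq hq0
  have hdeg : 0 < P.natDegree :=
    Nat.pos_of_ne_zero fun h => h1 (hPm.natDegree_eq_zero.1 h ▸ hP)
  obtain ⟨t, ht⟩ := exists_isRoot_of_mem_hankelKernel hL hP hmin hdeg
  exact ⟨t, fun f hf =>
    eval_eq_zero_of_dvd_of_eval_eq_zero (dvd_of_mem_hankelKernel hL hP hPm hmin hf) ht⟩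

end Polynomial

def momentVec (N : ℕ) (t : ℝ) : Fin N → ℝ := fun p => t ^ (p : ℕ)

def lastBasisVec (N : ℕ) : Fin N → ℝ := fun p => if (p : ℕ) = N - 1 then 1 else 0

def Matrix.IsHankel {α : Type*} {N : ℕ} (M : Matrix (Fin N) (Fin N) α) : Prop :=
  ∃ a : ℕ → α, ∀ i j, M i j = a (i + j)

noncomputable def momentFunctional {R : Type*} [CommSemiring R] (a : ℕ → R) : R[X] →ₗ[R] R :=
  Polynomial.lsum fun k => LinearMap.mulRight R (a k)

section Hankel

variable {N : ℕ}

theorem momentVec_dotProduct (t : ℝ) (y : Fin N → ℝ) : momentVec N t ⬝ᵥ y = (ofFn N y).eval t := by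
  simp [momentVec, ofFn_eq_sum_monomial, eval_finsetSum, dotProduct, mul_comm]

theorem lastBasisVec_eq_single (n : ℕ) : lastBasisVec (n + 1) = Pi.single (Fin.last n) 1 := by
  ext i
  simp [lastBasisVec, Pi.single_apply, Fin.ext_iff]

namespace Matrix.IsHankel

variable {α : Type*} {A B : Matrix (Fin N) (Fin N) α}

theorem transpose_eq (hA : A.IsHankel) : Aᵀ = A := by
  obtain ⟨a, ha⟩ := hA
  ext i j
  simp [ha, add_comm]

theorem sub [Sub α] (hA : A.IsHankel) (hB : B.IsHankel) : (A - B).IsHankel := by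
  obtain ⟨a, ha⟩ := hA
  obtain ⟨b, hb⟩ := hB
  exact ⟨a - b, fun i j => by simp [ha, hb]⟩

theorem smul {β : Type*} [SMul β α] (c : β) (hA : A.IsHankel) : (c • A).IsHankel := by
  obtain ⟨a, ha⟩ := hA
  exact ⟨c • a, fun i j => by simp [ha]⟩

end Matrix.IsHankel

theorem isHankel_vecMulVec_momentVec (t : ℝ) :
    (vecMulVec (momentVec N t) (momentVec N t)).IsHankel :=
  ⟨(t ^ ·), fun i j => by simp [vecMulVec_apply, momentVec, pow_add]⟩

theorem isHankel_vecMulVec_lastBasisVec :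
    (vecMulVec (lastBasisVec N) (lastBasisVec N)).IsHankel := by
  refine ⟨fun k => if k = 2 * (N - 1) then 1 else 0, fun i j => ?_⟩
  have := i.isLt
  have := j.isLt
  simp only [vecMulVec_apply, lastBasisVec]
  split_ifs <;> simp <;> omega

@[simp] theorem momentFunctional_monomial {R : Type*} [CommSemiring R] {a : ℕ → R} (k : ℕ)
    (c : R) : momentFunctional a (monomial k c) = c * a k := by
  simp [momentFunctional]

theorem toFn_dotProduct_mulVec_toFn {R : Type*} [CommSemiring R] {a : ℕ → R}
    {M : Matrix (Fin N) (Fin N) R} (hH : ∀ i j : Fin N, M i j = a (i + j)) {f g : R[X]}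
    (hf : f.natDegree < N) (hg : g.natDegree < N) :
    toFn N f ⬝ᵥ M *ᵥ toFn N g = momentFunctional a (f * g) := by
  classical
  conv_rhs => rw [← ofFn_comp_toFn_eq_id_of_natDegree_lt hf,
    ← ofFn_comp_toFn_eq_id_of_natDegree_lt hg, ofFn_eq_sum_monomial, ofFn_eq_sum_monomial,
    Finset.sum_mul_sum]
  simp [monomial_mul_monomial, dotProduct, mulVec, Finset.mul_sum, hH, mul_comm, mul_left_comm]

variable {a : ℕ → ℝ} {M : Matrix (Fin N) (Fin N) ℝ}

theorem momentFunctional_mul_self_nonneg (hH : ∀ i j : Fin N, M i j = a (i + j))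
    (hM : M.PosSemidef) {f : ℝ[X]} (hf : f.natDegree < N) : 0 ≤ momentFunctional a (f * f) := by
  rw [← toFn_dotProduct_mulVec_toFn hH hf hf]
  exact hM.dotProduct_mulVec_self_nonneg _

theorem mulVec_toFn_eq_zero_iff (hH : ∀ i j : Fin N, M i j = a (i + j)) {f : ℝ[X]}
    (hf : f.natDegree < N) :
    M *ᵥ toFn N f = 0 ↔ f ∈ hankelKernel (momentFunctional a) N := by
  refine ⟨fun h => ⟨hf, fun g hg => ?_⟩, fun h => ?_⟩
  · rw [mul_comm, ← toFn_dotProduct_mulVec_toFn hH hg hf, h, dotProduct_zero]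
  · set v := M *ᵥ toFn N f
    have hv : (ofFn N v).natDegree < N := ofFn_natDegree_lt (by omega) v
    rw [← dotProduct_self_eq_zero]
    conv_lhs => arg 1; rw [← toFn_comp_ofFn_eq_id N v]
    rw [toFn_dotProduct_mulVec_toFn hH hv hf, mul_comm]
    exact h.2 _ hv

end Hankel

section Nonempty

variable {n : ℕ} {a : ℕ → ℝ} {M : Matrix (Fin (n + 1)) (Fin (n + 1)) ℝ}

theorem ofFn_mem_hankelKernel
    (hH : ∀ i j : Fin (n + 1), M i j = a (i + j)) {x : Fin (n + 1) → ℝ} (hx : M *ᵥ x = 0) :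
    ofFn (n + 1) x ∈ hankelKernel (momentFunctional a) (n + 1) :=
  (mulVec_toFn_eq_zero_iff hH (ofFn_natDegree_lt (by omega) x)).1
    (by rwa [toFn_comp_ofFn_eq_id])

theorem eq_zero_of_one_mem_hankelKernel (hH : ∀ i j : Fin (n + 1), M i j = a (i + j))
    (hM : M.PosSemidef) (h1 : 1 ∈ hankelKernel (momentFunctional a) (n + 1))
    {x : Fin (n + 1) → ℝ} (hx : M *ᵥ x = 0) (hxn : x (Fin.last n) ≠ 0) : M = 0 := by
  have hcol : ∀ i (j : Fin n), M i j.castSucc = 0 := by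
    intro i j
    have hXj := X_pow_mem_hankelKernel (fun f hf => momentFunctional_mul_self_nonneg hH hM hf)
      h1 (j := j) (by omega)
    have hj : toFn (n + 1) (X ^ (j : ℕ) : ℝ[X]) = Pi.single j.castSucc 1 := by
      ext k
      simp [toFn, coeff_X_pow, Pi.single_apply, Fin.ext_iff, eq_comm]
    have := (mulVec_toFn_eq_zero_iff hH (by rw [natDegree_X_pow]; omega)).2 hXj
    rw [hj, mulVec_single_one] at this
    exact congrFun this i
  have hlast : M (Fin.last n) (Fin.last n) = 0 := by
    have := congrFun hx (Fin.last n)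
    simp only [mulVec, dotProduct, Fin.sum_univ_castSucc, hcol, zero_mul, Finset.sum_const_zero,
      zero_add, Pi.zero_apply] at this
    exact (mul_eq_zero.1 this).resolve_right hxn
  ext i j
  induction j using Fin.lastCases with
  | last =>
    induction i using Fin.lastCases with
    | last => exact hlast
    | cast i => rw [hH, add_comm, ← hH, hcol, Matrix.zero_apply]
  | cast j => exact hcol i j

theorem exists_mulVec_eq_momentVec_or_lastBasisVec (hH : M.IsHankel) (hM : M.PosSemidef)
    (hM0 : M ≠ 0) :
    ∃ w, (∃ t, M *ᵥ w = momentVec (n + 1) t) ∨ M *ᵥ w = lastBasisVec (n + 1) := by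
  obtain ⟨a, hH⟩ := hH
  by_cases hlast : ∀ x, M *ᵥ x = 0 → x (Fin.last n) = 0
  · obtain ⟨w, hw⟩ := hM.isHermitian.exists_mulVec_eq (z := lastBasisVec (n + 1)) fun x hx => by
      rw [lastBasisVec_eq_single, single_one_dotProduct, hlast x hx]
    exact ⟨w, .inr hw⟩
  obtain ⟨x, hx, hxn⟩ : ∃ x, M *ᵥ x = 0 ∧ x (Fin.last n) ≠ 0 := by simpa using hlast
  have hx0 : ofFn (n + 1) x ≠ 0 := fun h => hxn <| by
    have := ofFn_coeff_eq_val_of_lt x n.lt_succ_self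
    rw [h, coeff_zero] at this
    exact this.symm
  have h1 : 1 ∉ hankelKernel (momentFunctional a) (n + 1) := fun h1 =>
    hM0 (eq_zero_of_one_mem_hankelKernel hH hM h1 hx hxn)
  obtain ⟨t, ht⟩ := exists_forall_eval_eq_zero_of_mem_hankelKernel
    (fun f hf => momentFunctional_mul_self_nonneg hH hM hf) (ofFn_mem_hankelKernel hH hx) hx0 h1
  obtain ⟨w, hw⟩ := hM.isHermitian.exists_mulVec_eq (z := momentVec (n + 1) t) fun y hy => by
    rw [momentVec_dotProduct]
    exact ht _ (ofFn_mem_hankelKernel hH hy)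
  exact ⟨w, .inl ⟨t, hw⟩⟩

end Nonempty

theorem Matrix.IsHankel.exists_eq_sum_smul_vecMulVec {r N : ℕ} {M : Matrix (Fin N) (Fin N) ℝ}
    (hH : M.IsHankel) (hM : M.PosSemidef) (hr : M.rank = r) :
    ∃ (lam : Fin r → ℝ) (z : Fin r → Fin N → ℝ), (∀ i, 0 < lam i) ∧
      (∀ i, (∃ t, z i = momentVec N t) ∨ z i = lastBasisVec N) ∧
      M = ∑ i, lam i • vecMulVec (z i) (z i) := by
  induction r generalizing M with
  | zero =>
    exact ⟨Fin.elim0, Fin.elim0, nofun, nofun, by simpa using rank_eq_zero_iff.1 hr⟩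
  | succ r ih =>
    have hM0 : M ≠ 0 := by rintro rfl; simp at hr
    obtain ⟨n, rfl⟩ : ∃ n, N = n + 1 :=
      Nat.exists_eq_succ_of_ne_zero fun hN => hM0 (by subst hN; exact Subsingleton.elim _ _)
    obtain ⟨w, hw⟩ := exists_mulVec_eq_momentVec_or_lastBasisVec hH hM hM0
    have hz0 : M *ᵥ w ≠ 0 := by
      rcases hw with ⟨t, hw⟩ | hw <;> rw [hw] <;> intro h
      · simpa [momentVec] using congrFun h 0
      · simpa [lastBasisVec] using congrFun h (Fin.last n)
    have hzH : (vecMulVec (M *ᵥ w) (M *ᵥ w)).IsHankel := by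
      rcases hw with ⟨t, hw⟩ | hw <;> rw [hw]
      exacts [isHankel_vecMulVec_momentVec t, isHankel_vecMulVec_lastBasisVec]
    obtain ⟨lam, z, hlam, hz, hsum⟩ := ih (hH.sub (hzH.smul _))
      (hM.sub_smul_vecMulVec_mulVec w)
      (by have := hM.rank_sub_smul_vecMulVec_mulVec_add_one hz0; omega)
    refine ⟨Fin.cons (w ⬝ᵥ M *ᵥ w)⁻¹ lam, Fin.cons (M *ᵥ w) z,
      Fin.cases (inv_pos.2 (hM.dotProduct_mulVec_pos hz0)) hlam, Fin.cases hw hz, ?_⟩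
    simp only [Fin.sum_univ_succ, Fin.cons_zero, Fin.cons_succ, ← hsum, add_sub_cancel]

/-- A real Hankel matrix (entries depending only on `i + j`) is positive semidefinite
(in the sense `xᵀ M x ≥ 0` for all real `x`) if and only if it is a positive combination
of `r = rank M` rank-one matrices `z zᵀ`, where each `z` is either a moment vector
`(1, t, t², …, t^{N−1})` or the last standard basis vector `e_{N−1}`. -/
theorem stmt_19 {N : ℕ} (M : Matrix (Fin N) (Fin N) ℝ)
    (a : ℕ → ℝ) (hHankel : ∀ i j : Fin N, M i j = a (i.val + j.val)) :
    (∀ x : Fin N → ℝ, 0 ≤ dotProduct x (M.mulVec x)) ↔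
      ∃ (lam : Fin M.rank → ℝ) (z : Fin M.rank → Fin N → ℝ),
        (∀ i, 0 < lam i) ∧
        (∀ i, (∃ t : ℝ, z i = fun p : Fin N => t ^ (p : ℕ)) ∨
              (z i = fun p : Fin N => if (p : ℕ) = N - 1 then (1 : ℝ) else 0)) ∧
        M = ∑ i, lam i • Matrix.vecMulVec (z i) (z i) := by
  have hH : M.IsHankel := ⟨a, hHankel⟩
  rw [← posSemidef_iff_forall_dotProduct_mulVec_nonneg hH.transpose_eq]
  refine ⟨fun hM => hH.exists_eq_sum_smul_vecMulVec hM rfl, ?_⟩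
  rintro ⟨lam, z, hlam, -, hM⟩
  rw [hM]
  exact posSemidef_sum _ fun i _ => by
    simpa using (posSemidef_vecMulVec_self_star (z i)).smul (hlam i).le
end
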